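/- arXiv:0709.0459 — 11 statements merged into one kernel-verified Lean document; each statement's English description precedes it below -/
import Mathlib

section
/- The set G := {x ∈ E | ∀ ν ∈ ℕ, ∇^[ν](x) ∈ Set.range (b^[ν])} is an R-submodule of E, and it is stable under b, i.e. b(G) ⊆ G. -/
/-!
Write `Dₘ` for the set of `x` with `∇^[k] x ∈ range (b ^ (k + m))` for every `k`, so that the set
of the theorem is `D₀`. Since `∇` commutes with `b`, both `b` and `∇` map `Dₘ` into `Dₘ₊₁`. The
Leibniz rule gives `∇^[ν+1] (r • x) = ∇^[ν] (d r • b x) + ∇^[ν] (r • ∇ x)`, so an induction on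
`ν`, uniform in `m`, shows that `Dₘ` is closed under scalars: passing to `Dₘ₊₁` pays for the extra
factor `b`. Finally `D₁ ⊆ D₀`, which gives the stability under `b`.
-/

section

variable {R E : Type*} [Semiring R] [AddCommMonoid E] [Module R E]
  (b : E →ₗ[R] E) (nab : E →+ E)

def nablaDivisible (m : ℕ) : AddSubmonoid E where
  carrier := {x | ∀ k, (⇑nab)^[k] x ∈ LinearMap.range (b ^ (k + m))}
  add_mem' hx hy k := by
    rw [iterate_map_add]
    exact add_mem (hx k) (hy k)
  zero_mem' k := by
    rw [iterate_map_zero]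
    exact zero_mem _

variable {b nab}

theorem mem_nablaDivisible_zero_iff {x : E} :
    x ∈ nablaDivisible b nab 0 ↔ ∀ ν, (⇑nab)^[ν] x ∈ Set.range (⇑b)^[ν] := by
  simp only [nablaDivisible, AddSubmonoid.mem_mk, AddSubsemigroup.mem_mk, Set.mem_ofPred_eq,
    add_zero, LinearMap.mem_range, Module.End.pow_apply, Set.mem_range]

theorem nablaDivisible_succ_le (m : ℕ) : nablaDivisible b nab (m + 1) ≤ nablaDivisible b nab m :=
  fun _ hx k => LinearMap.range_comp_le_range b (b ^ (k + m)) <| by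
    rw [← Module.End.mul_eq_comp, ← pow_succ]
    exact hx k

theorem map_mem_nablaDivisible_succ (h_comm : Function.Commute nab b) {m : ℕ} {x : E}
    (hx : x ∈ nablaDivisible b nab m) : b x ∈ nablaDivisible b nab (m + 1) := by
  intro k
  obtain ⟨y, hy⟩ := hx k
  refine ⟨y, ?_⟩
  rw [(h_comm.iterate_left k).eq, ← hy, ← add_assoc, pow_succ', Module.End.mul_apply]

theorem nabla_mem_nablaDivisible_succ {m : ℕ} {x : E} (hx : x ∈ nablaDivisible b nab m) :
    nab x ∈ nablaDivisible b nab (m + 1) := fun k => by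
  rw [← Function.iterate_succ_apply, ← add_assoc, add_right_comm]
  exact hx (k + 1)

theorem iterate_nabla_smul_mem_range (d : R → R)
    (h_leibniz : ∀ (r : R) (x : E), nab (r • x) = d r • b x + r • nab x)
    (h_comm : Function.Commute nab b) (ν : ℕ) :
    ∀ {m : ℕ} {x : E}, x ∈ nablaDivisible b nab m →
      ∀ r : R, (⇑nab)^[ν] (r • x) ∈ LinearMap.range (b ^ (ν + m)) := by
  induction ν with
  | zero =>
    intro m x hx r
    simpa using Submodule.smul_mem _ r (hx 0)
  | succ ν ih =>
    intro m x hx r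
    rw [Function.iterate_succ_apply, h_leibniz, iterate_map_add, add_right_comm]
    exact add_mem (ih (map_mem_nablaDivisible_succ h_comm hx) (d r))
      (ih (nabla_mem_nablaDivisible_succ hx) r)

theorem smul_mem_nablaDivisible (d : R → R)
    (h_leibniz : ∀ (r : R) (x : E), nab (r • x) = d r • b x + r • nab x)
    (h_comm : Function.Commute nab b) {m : ℕ} (r : R) {x : E}
    (hx : x ∈ nablaDivisible b nab m) : r • x ∈ nablaDivisible b nab m :=
  fun k => iterate_nabla_smul_mem_range d h_leibniz h_comm k hx r

end

theorem G_is_submodule_and_b_stable_general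
    (R : Type*) [CommRing R] [Algebra ℂ R]
    (E : Type*) [AddCommGroup E] [Module R E] [Module ℂ E]
    (d : Derivation ℂ R R) (b : E →ₗ[R] E) (nab : E →ₗ[ℂ] E)
    (h_leibniz : ∀ (r : R) (x : E), nab (r • x) = d r • b x + r • nab x)
    (h_comm : ∀ x : E, nab (b x) = b (nab x)) :
    ∃ G' : Submodule R E,
      (G' : Set E) = {x : E | ∀ ν : ℕ, (⇑nab)^[ν] x ∈ Set.range ((⇑b)^[ν])} ∧
      ∀ x ∈ G', b x ∈ G' := by
  have h_comm : Function.Commute nab.toAddMonoidHom b := h_comm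
  let G' : Submodule R E :=
    { nablaDivisible b nab.toAddMonoidHom 0 with
      smul_mem' := fun r _ hx => smul_mem_nablaDivisible d h_leibniz h_comm r hx }
  exact ⟨G', Set.ext fun _ => mem_nablaDivisible_zero_iff,
    fun _ hx => nablaDivisible_succ_le 0 (map_mem_nablaDivisible_succ h_comm hx)⟩

/-- The set `G = {x | ∀ ν, nab^[ν] x ∈ range (b^[ν])}` is an `R`-submodule of `E`,
stable under `b` (Proposition 2.3 of the paper). -/
theorem G_is_submodule_and_b_stable
    (R : Type*) [CommRing R] [Algebra ℂ R]
    (E : Type*) [AddCommGroup E] [Module R E] [Module ℂ E] [IsScalarTower ℂ R E]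
    (d : Derivation ℂ R R) (b : E →ₗ[R] E) (nab : E →ₗ[ℂ] E)
    (h_leibniz : ∀ (r : R) (x : E), nab (r • x) = d r • b x + r • nab x)
    (h_comm : ∀ x : E, nab (b x) = b (nab x)) :
    ∃ G' : Submodule R E,
      (G' : Set E) = {x : E | ∀ ν : ℕ, (⇑nab)^[ν] x ∈ Set.range ((⇑b)^[ν])} ∧
      ∀ x ∈ G', b x ∈ G' :=
  G_is_submodule_and_b_stable_general R E d b nab h_leibniz h_comm
end

section
/- Every R-submodule F of E satisfying ∇(F) ⊆ b(F) (i.e. for each x ∈ F there is y ∈ F with ∇(x) = b(y)) is contained in G. Thus G is the largest R-submodule of E stable under b⁻¹∇. -/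
theorem Function.Commute.image_iterate_subset {α : Type*} {f g : α → α}
    (h : Function.Commute f g) {S : Set α} (hS : f '' S ⊆ g '' S) (n : ℕ) :
    f^[n] '' S ⊆ g^[n] '' S := by
  induction n with
  | zero => simp only [Function.iterate_zero, Set.image_id, subset_rfl]
  | succ n ih =>
    calc f^[n + 1] '' S = f^[n] '' (f '' S) := by
          rw [Function.iterate_succ, Set.image_comp]
      _ ⊆ f^[n] '' (g '' S) := Set.image_mono hS
      _ = g '' (f^[n] '' S) := by
          rw [← Set.image_comp, ← Set.image_comp, (h.iterate_left n).comp_eq]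
      _ ⊆ g '' (g^[n] '' S) := Set.image_mono ih
      _ = g^[n + 1] '' S := by rw [Function.iterate_succ', Set.image_comp]

theorem G_is_largest_stable_submodule_general
    (R : Type*) [CommRing R]
    (E : Type*) [AddCommGroup E] [Module R E] [Module ℂ E]
    (b : E →ₗ[R] E) (nab : E →ₗ[ℂ] E)
    (h_comm : ∀ x : E, nab (b x) = b (nab x))
    (G : Set E)
    (hG : G = {x : E | ∀ ν : ℕ, (⇑nab)^[ν] x ∈ Set.range ((⇑b)^[ν])})
    (F : Submodule R E)
    (hF : ∀ x ∈ F, ∃ y ∈ F, nab x = b y) :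
    (F : Set E) ⊆ G := by
  subst hG
  have hstable : nab '' F ⊆ b '' F := by
    rintro _ ⟨x, hx, rfl⟩
    obtain ⟨y, hy, hxy⟩ := hF x hx
    exact ⟨y, hy, hxy.symm⟩
  intro x hx ν
  obtain ⟨y, -, hy⟩ :=
    Function.Commute.image_iterate_subset h_comm hstable ν ⟨x, hx, rfl⟩
  exact ⟨y, hy⟩

/-- Every `R`-submodule `F` of `E` stable under `b⁻¹∇` (i.e. `∇(F) ⊆ b(F)`) is
contained in `G`; thus `G` is the largest such submodule (maximality assertion
of Proposition 2.3 of the paper). -/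
theorem G_is_largest_stable_submodule
    (R : Type*) [CommRing R] [Algebra ℂ R]
    (E : Type*) [AddCommGroup E] [Module R E] [Module ℂ E] [IsScalarTower ℂ R E]
    (d : Derivation ℂ R R) (b : E →ₗ[R] E) (nab : E →ₗ[ℂ] E)
    (h_leibniz : ∀ (r : R) (x : E), nab (r • x) = d r • b x + r • nab x)
    (h_comm : ∀ x : E, nab (b x) = b (nab x))
    (G : Set E)
    (hG : G = {x : E | ∀ ν : ℕ, (⇑nab)^[ν] x ∈ Set.range ((⇑b)^[ν])})
    (F : Submodule R E)
    (hF : ∀ x ∈ F, ∃ y ∈ F, nab x = b y) :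
    (F : Set E) ⊆ G :=
  G_is_largest_stable_submodule_general R E b nab h_comm G hG F hF
end

section
/- Let x ∈ E and let N be the R-submodule of E generated by the set {b^[n](x) : n ∈ ℕ}. If ∇(x) ∈ b(G + N) (the image under b of the submodule G + N), then x ∈ G. In particular, if ∇(x) = 0 then x ∈ G, so Ker ∇ ⊆ G. -/
/-!
Let `T k t := truncatedG b ∇ k t` be the set of `y` with `∇^[j] y ∈ b^(j+t) E` for all `j ≤ k`,
so that `G = ⋂ₖ T k 0`.
The Leibniz rule `∇(r • y) = d r • b y + r • ∇ y` together with `∇ ∘ b = b ∘ ∇` shows, by induction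
on `k` with the shift `t` raised by one at each step, that every `T k t` is an `R`-submodule; it is
stable under `b`, and `b` maps it into `T k (t + 1)`. Hence if `x ∈ T k 0`, then `N ⊆ T k 0`, so
`∇ x ∈ b (G + N) ⊆ T k 1`, which says `x ∈ T (k + 1) 0`.
-/

section

variable {R E : Type*} [CommRing R] [AddCommGroup E] [Module R E] (b : E →ₗ[R] E) (nab : E →+ E)

def truncatedG (k t : ℕ) : AddSubmonoid E where
  carrier := {y | ∀ j ≤ k, nab^[j] y ∈ LinearMap.range (b ^ (j + t))}
  zero_mem' j _ := by simp only [iterate_map_zero, zero_mem]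
  add_mem' hu hv j hj := by simpa only [iterate_map_add] using add_mem (hu j hj) (hv j hj)

variable {b nab} {k t : ℕ} {y : E}

theorem mem_truncatedG :
    y ∈ truncatedG b nab k t ↔ ∀ j ≤ k, nab^[j] y ∈ LinearMap.range (b ^ (j + t)) :=
  Iff.rfl

theorem mem_truncatedG_zero : y ∈ truncatedG b nab 0 t ↔ y ∈ LinearMap.range (b ^ t) := by
  simp [mem_truncatedG]

theorem mem_truncatedG_succ :
    y ∈ truncatedG b nab (k + 1) t ↔
      y ∈ LinearMap.range (b ^ t) ∧ nab y ∈ truncatedG b nab k (t + 1) := by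
  simp only [mem_truncatedG]
  constructor
  · intro hy
    refine ⟨by simpa using hy 0 (Nat.zero_le _), fun j hj => ?_⟩
    simpa only [← Function.iterate_succ_apply, Nat.add_right_comm, ← Nat.add_assoc] using
      hy (j + 1) (by omega)
  · rintro ⟨hy, hnab⟩ (_ | j) hj
    · simpa using hy
    · rw [Function.iterate_succ_apply, Nat.add_right_comm, Nat.add_assoc]
      exact hnab j (by omega)

theorem truncatedG_succ_le : truncatedG b nab (k + 1) t ≤ truncatedG b nab k t :=
  fun _ hy j hj => hy j (by omega)

theorem truncatedG_shift_le {s : ℕ} (hst : s ≤ t) : truncatedG b nab k t ≤ truncatedG b nab k s :=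
  fun _ hy j hj => (LinearMap.iterateRange b).monotone (by omega : j + s ≤ j + t) (hy j hj)

theorem apply_mem_truncatedG_succ (h_comm : Function.Commute nab b)
    (hy : y ∈ truncatedG b nab k t) : b y ∈ truncatedG b nab k (t + 1) := by
  intro j hj
  obtain ⟨z, hz⟩ := hy j hj
  refine ⟨z, ?_⟩
  rw [(h_comm.iterate_left j).eq, ← hz, ← Nat.add_assoc, pow_succ', Module.End.mul_apply]

theorem smul_mem_truncatedG {d : R → R}
    (h_leibniz : ∀ (r : R) (y : E), nab (r • y) = d r • b y + r • nab y)
    (h_comm : Function.Commute nab b) (r : R) (hy : y ∈ truncatedG b nab k t) :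
    r • y ∈ truncatedG b nab k t := by
  induction k generalizing t r y with
  | zero => exact mem_truncatedG_zero.2 (Submodule.smul_mem _ r (mem_truncatedG_zero.1 hy))
  | succ k ih =>
    obtain ⟨hy₀, hnab⟩ := mem_truncatedG_succ.1 hy
    refine mem_truncatedG_succ.2 ⟨Submodule.smul_mem _ r hy₀, ?_⟩
    rw [h_leibniz]
    exact add_mem (ih (d r) (apply_mem_truncatedG_succ h_comm (truncatedG_succ_le hy))) (ih r hnab)

theorem forall_iterate_mem_range_iff :
    (∀ ν, nab^[ν] y ∈ Set.range (⇑b)^[ν]) ↔ ∀ k, y ∈ truncatedG b nab k 0 := by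
  simp only [← Module.End.coe_pow, ← LinearMap.coe_range, SetLike.mem_coe]
  exact ⟨fun hy k j _ => hy j, fun hy ν => hy ν ν le_rfl⟩

theorem forall_mem_truncatedG_of_nab_eq {d : R → R}
    (h_leibniz : ∀ (r : R) (y : E), nab (r • y) = d r • b y + r • nab y)
    (h_comm : Function.Commute nab b) {x g m : E} (hg : ∀ k, g ∈ truncatedG b nab k 0)
    (hm : m ∈ Submodule.span R (Set.range fun n : ℕ => (⇑b)^[n] x)) (hx : nab x = b (g + m))
    (k : ℕ) : x ∈ truncatedG b nab k 0 := by
  induction k with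
  | zero => simp [mem_truncatedG_zero]
  | succ k ih =>
    let T : Submodule R E :=
      { truncatedG b nab k 0 with
        smul_mem' := fun r _ hy => smul_mem_truncatedG h_leibniz h_comm r hy }
    have hb : Set.MapsTo b T T := fun _ hy =>
      truncatedG_shift_le (Nat.zero_le 1) (apply_mem_truncatedG_succ h_comm hy)
    have hN : m ∈ T := (Submodule.span_le.2 (Set.range_subset_iff.2 fun n => hb.iterate n ih)) hm
    refine mem_truncatedG_succ.2 ⟨by simp, ?_⟩
    rw [hx]
    exact apply_mem_truncatedG_succ h_comm (add_mem (hg k) hN)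

end

theorem mem_G_of_nabla_mem_general
    (R : Type*) [CommRing R] [Algebra ℂ R]
    (E : Type*) [AddCommGroup E] [Module R E] [Module ℂ E]
    (d : Derivation ℂ R R) (b : E →ₗ[R] E) (nab : E →ₗ[ℂ] E)
    (h_leibniz : ∀ (r : R) (x : E), nab (r • x) = d r • b x + r • nab x)
    (h_comm : ∀ x : E, nab (b x) = b (nab x))
    (G : Set E)
    (hG : G = {x : E | ∀ ν : ℕ, (⇑nab)^[ν] x ∈ Set.range ((⇑b)^[ν])})
    (x : E)
    (N : Submodule R E)
    (hN : N = Submodule.span R (Set.range fun n : ℕ => (⇑b)^[n] x))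
    (hx : nab x ∈ ⇑b '' {z : E | ∃ g ∈ G, ∃ m ∈ N, z = g + m}) :
    x ∈ G ∧ ∀ y : E, nab y = 0 → y ∈ G := by
  subst hG hN
  obtain ⟨_, ⟨g, hg, m, hm, rfl⟩, hgm⟩ := hx
  have h_comm : Function.Commute nab.toAddMonoidHom b := h_comm
  refine ⟨?_, fun y hy => ?_⟩
  · exact forall_iterate_mem_range_iff.2 <| forall_mem_truncatedG_of_nab_eq h_leibniz h_comm
      (forall_iterate_mem_range_iff.1 hg) hm hgm.symm
  · exact forall_iterate_mem_range_iff.2 <| forall_mem_truncatedG_of_nab_eq h_leibniz h_comm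
      (g := 0) (m := 0) (fun _ => zero_mem _) (zero_mem _) (by simpa using hy)

/-- Part (2) of Proposition 2.3 of the paper: if `∇ x ∈ b(G + N)` where `N` is the
`R`-submodule generated by `{b^[n] x : n ∈ ℕ}`, then `x ∈ G`.
In particular `Ker ∇ ⊆ G`. -/
theorem mem_G_of_nabla_mem
    (R : Type*) [CommRing R] [Algebra ℂ R]
    (E : Type*) [AddCommGroup E] [Module R E] [Module ℂ E] [IsScalarTower ℂ R E]
    (d : Derivation ℂ R R) (b : E →ₗ[R] E) (nab : E →ₗ[ℂ] E)
    (h_leibniz : ∀ (r : R) (x : E), nab (r • x) = d r • b x + r • nab x)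
    (h_comm : ∀ x : E, nab (b x) = b (nab x))
    (G : Set E)
    (hG : G = {x : E | ∀ ν : ℕ, (⇑nab)^[ν] x ∈ Set.range ((⇑b)^[ν])})
    (x : E)
    (N : Submodule R E)
    (hN : N = Submodule.span R (Set.range fun n : ℕ => (⇑b)^[n] x))
    (hx : nab x ∈ ⇑b '' {z : E | ∃ g ∈ G, ∃ m ∈ N, z = g + m}) :
    x ∈ G ∧ ∀ y : E, nab y = 0 → y ∈ G :=
  mem_G_of_nabla_mem_general R E d b nab h_leibniz h_comm G hG x N hN hx
end

section
/- Let r ∈ R be an element such that for every ν ∈ ℕ and every y ∈ E, r • y ∈ Set.range (b^[ν]) implies y ∈ Set.range (b^[ν]). If x ∈ E satisfies r • x ∈ G, then x ∈ G. -/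
/-!
By the Leibniz rule, `∇^[ν] (r • x) - r • ∇^[ν] x` is an `R`-combination of the terms
`b^[k] (∇^[ν - k] x)` with `1 ≤ k ≤ ν`. By strong induction on `ν`, each such term lies in the
range of `b^[ν]`, since `∇^[ν - k] x` lies in the range of `b^[ν - k]`. As `∇^[ν] (r • x)` lies
there too (`r • x ∈ G`), so does `r • ∇^[ν] x`, and the hypothesis on `r` gives
`∇^[ν] x ∈ range (b^[ν])`.
-/

section LowerOrderSpan

variable {R E : Type*} [Ring R] [AddCommGroup E] [Module R E] (b : E →ₗ[R] E) (nab : E →+ E)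

def lowerOrderSpan (x : E) (ν : ℕ) : Submodule R E :=
  Submodule.span R ((fun k => (⇑b)^[k] ((⇑nab)^[ν - k] x)) '' Set.Icc 1 ν)

theorem lowerOrderSpan_le_range {x : E} {ν : ℕ}
    (hx : ∀ j < ν, (⇑nab)^[j] x ∈ Set.range ((⇑b)^[j])) :
    lowerOrderSpan b nab x ν ≤ LinearMap.range (b ^ ν) := by
  rw [lowerOrderSpan, Submodule.span_le]
  rintro _ ⟨k, ⟨hk1, hkν⟩, rfl⟩
  obtain ⟨w, hw⟩ := hx (ν - k) (by omega)
  refine ⟨w, ?_⟩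
  dsimp only
  rw [Module.End.pow_apply, ← hw, ← Function.iterate_add_apply, Nat.add_sub_cancel' hkν]

theorem map_lowerOrderSpan_le (x : E) (ν : ℕ) :
    (lowerOrderSpan b nab x ν).map b ≤ lowerOrderSpan b nab x (ν + 1) := by
  rw [lowerOrderSpan, Submodule.map_span, Submodule.span_le]
  rintro _ ⟨_, ⟨k, ⟨hk1, hkν⟩, rfl⟩, rfl⟩
  refine Submodule.subset_span ⟨k + 1, ⟨by omega, by omega⟩, ?_⟩
  simp only [Nat.add_sub_add_right, Function.iterate_succ_apply']

variable {b nab} (d : R → R) (h_leibniz : ∀ (s : R) (z : E), nab (s • z) = d s • b z + s • nab z)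
  (h_comm : Function.Commute nab b)

include h_leibniz h_comm in
theorem apply_mem_lowerOrderSpan_succ {x : E} {ν : ℕ} {z : E}
    (hz : z ∈ lowerOrderSpan b nab x ν) : nab z ∈ lowerOrderSpan b nab x (ν + 1) := by
  induction hz using Submodule.span_induction with
  | mem _ hg =>
    obtain ⟨k, ⟨hk1, hkν⟩, rfl⟩ := hg
    rw [(h_comm.iterate_right k).eq, ← Function.iterate_succ_apply' nab,
      show (ν - k).succ = ν + 1 - k by omega]
    exact Submodule.subset_span ⟨k, ⟨hk1, by omega⟩, rfl⟩
  | zero => simp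
  | add _ _ _ _ hy hz => rw [map_add]; exact add_mem hy hz
  | smul s z hz ih =>
    rw [h_leibniz]
    exact add_mem (Submodule.smul_mem _ _ (map_lowerOrderSpan_le b nab x ν ⟨z, hz, rfl⟩))
      (Submodule.smul_mem _ _ ih)

include h_leibniz h_comm in
theorem iterate_smul_sub_smul_iterate_mem_lowerOrderSpan (r : R) (x : E) (ν : ℕ) :
    (⇑nab)^[ν] (r • x) - r • (⇑nab)^[ν] x ∈ lowerOrderSpan b nab x ν := by
  induction ν with
  | zero => simp
  | succ n ih =>
    have hsplit : (⇑nab)^[n + 1] (r • x) - r • (⇑nab)^[n + 1] x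
        = d r • b ((⇑nab)^[n] x)
          + nab ((⇑nab)^[n] (r • x) - r • (⇑nab)^[n] x) := by
      simp only [Function.iterate_succ_apply', map_sub, h_leibniz]
      abel
    rw [hsplit]
    exact add_mem
      (Submodule.smul_mem _ _ (Submodule.subset_span ⟨1, ⟨le_rfl, by omega⟩, by simp⟩))
      (apply_mem_lowerOrderSpan_succ d h_leibniz h_comm ih)

end LowerOrderSpan

theorem mem_G_of_smul_mem_G_general
    (R : Type*) [CommRing R] [Algebra ℂ R]
    (E : Type*) [AddCommGroup E] [Module R E] [Module ℂ E]
    (d : Derivation ℂ R R) (b : E →ₗ[R] E) (nab : E →ₗ[ℂ] E)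
    (h_leibniz : ∀ (r : R) (x : E), nab (r • x) = d r • b x + r • nab x)
    (h_comm : ∀ x : E, nab (b x) = b (nab x))
    (G : Set E)
    (hG : G = {x : E | ∀ ν : ℕ, (⇑nab)^[ν] x ∈ Set.range ((⇑b)^[ν])})
    (r : R)
    (hr : ∀ (ν : ℕ) (y : E), r • y ∈ Set.range ((⇑b)^[ν]) → y ∈ Set.range ((⇑b)^[ν]))
    (x : E) (hx : r • x ∈ G) :
    x ∈ G := by
  subst hG
  intro ν
  induction ν using Nat.strong_induction_on with
  | _ ν IH =>
    have hrange : (LinearMap.range (b ^ ν) : Set E) = Set.range (⇑b)^[ν] := by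
      rw [LinearMap.coe_range, Module.End.coe_pow]
    have hrem : (⇑nab)^[ν] (r • x) - r • (⇑nab)^[ν] x ∈ LinearMap.range (b ^ ν) :=
      lowerOrderSpan_le_range b nab.toAddMonoidHom IH
        (iterate_smul_sub_smul_iterate_mem_lowerOrderSpan (b := b) (nab := nab.toAddMonoidHom)
          d h_leibniz h_comm r x ν)
    have hrx : (⇑nab)^[ν] (r • x) ∈ LinearMap.range (b ^ ν) := by
      rw [← SetLike.mem_coe, hrange]
      exact hx ν
    apply hr ν
    rw [← hrange, SetLike.mem_coe, ← sub_sub_cancel ((⇑nab)^[ν] (r • x)) (r • (⇑nab)^[ν] x)]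
    exact Submodule.sub_mem _ hrx hrem

/-- Part (3) of Proposition 2.3 of the paper: if `r` is a non-zero-divisor in the
appropriate sense (`r • y ∈ range (b^[ν]) → y ∈ range (b^[ν])` for all `ν`), then
`r • x ∈ G` implies `x ∈ G`. -/
theorem mem_G_of_smul_mem_G
    (R : Type*) [CommRing R] [Algebra ℂ R]
    (E : Type*) [AddCommGroup E] [Module R E] [Module ℂ E] [IsScalarTower ℂ R E]
    (d : Derivation ℂ R R) (b : E →ₗ[R] E) (nab : E →ₗ[ℂ] E)
    (h_leibniz : ∀ (r : R) (x : E), nab (r • x) = d r • b x + r • nab x)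
    (h_comm : ∀ x : E, nab (b x) = b (nab x))
    (G : Set E)
    (hG : G = {x : E | ∀ ν : ℕ, (⇑nab)^[ν] x ∈ Set.range ((⇑b)^[ν])})
    (r : R)
    (hr : ∀ (ν : ℕ) (y : E), r • y ∈ Set.range ((⇑b)^[ν]) → y ∈ Set.range ((⇑b)^[ν]))
    (x : E) (hx : r • x ∈ G) :
    x ∈ G :=
  mem_G_of_smul_mem_G_general R E d b nab h_leibniz h_comm G hG r hr x hx
end

section
/- Assume b is injective, and let r ∈ R be an element such that for every ν ∈ ℕ and every y ∈ E, r • y ∈ Set.range (b^[ν]) implies y ∈ Set.range (b^[ν]). If x ∈ G and r • x ∈ b(G), then x ∈ b(G). -/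
/-!
By the iterated Leibniz rule `∇ⁿ(r • x) = ∑ᵢ (n choose i) • dⁱ r • bⁱ ∇ⁿ⁻ⁱ x`, if `∇ʲ x ∈ bʲ⁺¹ E`
for all `j < n`, then `∇ⁿ(r • x) ≡ r • ∇ⁿ x` modulo `bⁿ⁺¹ E`. For injective `b`, `x ∈ b(G)` exactly
when `∇ⁿ x ∈ bⁿ⁺¹ E` for all `n`, so strong induction on `n`, together with the hypothesis on `r`,
transfers this property from `r • x` to `x`.
-/

open Finset Function

section Leibniz

variable {R E F : Type*} [Semiring R] [AddCommMonoid E] [Module R E]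
  [FunLike F E E] [AddMonoidHomClass F E E]
  {d : R → R} {b : E → E} {nab : F}

theorem iterate_apply_smul_eq_sum_choose
    (h_leibniz : ∀ (r : R) (x : E), nab (r • x) = d r • b x + r • nab x)
    (h_comm : Function.Commute nab b) (n : ℕ) (r : R) (x : E) :
    (⇑nab)^[n] (r • x) =
      ∑ i ∈ range (n + 1), n.choose i • (d^[i] r • b^[i] ((⇑nab)^[n - i] x)) := by
  induction n with
  | zero => simp
  | succ n ih =>
    rw [sum_choose_succ_nsmul (fun i j => d^[i] r • b^[i] ((⇑nab)^[j] x)) n]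
    simp only [iterate_succ_apply', ih, map_sum, map_nsmul, h_leibniz, smul_add, sum_add_distrib]
    rw [add_comm]
    congr 1
    refine sum_congr rfl fun i hi => ?_
    rw [h_comm.iterate_right i, ← iterate_succ_apply' nab,
      Nat.sub_add_comm (Nat.lt_succ_iff.mp (mem_range.mp hi))]

end Leibniz

section Filtration

variable {R E F : Type*} [Ring R] [AddCommGroup E] [Module R E]
  [FunLike F E E] [AddMonoidHomClass F E E]
  {d : R → R} {b : E →ₗ[R] E} {nab : F}

theorem smul_iterate_mem_range_iff
    (h_leibniz : ∀ (r : R) (x : E), nab (r • x) = d r • b x + r • nab x)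
    (h_comm : Function.Commute nab b) {n : ℕ} {x : E}
    (hx : ∀ j < n, (⇑nab)^[j] x ∈ Set.range (⇑b)^[j + 1]) (r : R) :
    r • (⇑nab)^[n] x ∈ Set.range (⇑b)^[n + 1] ↔
      (⇑nab)^[n] (r • x) ∈ Set.range (⇑b)^[n + 1] := by
  have hp : ∀ m, Set.range (⇑b)^[m] = LinearMap.range (b ^ m) := fun m => by
    rw [LinearMap.coe_range, Module.End.coe_pow]
  have hdiff : (⇑nab)^[n] (r • x) - r • (⇑nab)^[n] x ∈ LinearMap.range (b ^ (n + 1)) := by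
    rw [iterate_apply_smul_eq_sum_choose h_leibniz h_comm, sum_range_succ']
    simp only [Nat.choose_zero_right, iterate_zero_apply, Nat.sub_zero, one_smul,
      add_sub_cancel_right]
    refine Submodule.sum_mem _ fun i hi => nsmul_mem (Submodule.smul_mem _ _ ?_) _
    have hi : i < n := mem_range.mp hi
    obtain ⟨y, hy⟩ := hx (n - (i + 1)) (by omega)
    refine ⟨y, ?_⟩
    rw [Module.End.pow_apply, ← hy, ← iterate_add_apply]
    congr 1
    omega
  rw [hp, SetLike.mem_coe, SetLike.mem_coe]
  simpa only [sub_sub_cancel] using Submodule.sub_mem_iff_left (x := (⇑nab)^[n] (r • x)) _ hdiff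

end Filtration

theorem mem_image_setOf_iterate_mem_range_iff {E : Type*} {b nab : E → E}
    (hb : Injective b) (h_comm : Function.Commute nab b) {x : E} :
    x ∈ b '' {y | ∀ n, nab^[n] y ∈ Set.range b^[n]} ↔ ∀ n, nab^[n] x ∈ Set.range b^[n + 1] := by
  constructor
  · rintro ⟨y, hy, rfl⟩ n
    obtain ⟨w, hw⟩ := hy n
    exact ⟨w, by rw [iterate_succ_apply', hw, h_comm.iterate_left n]⟩
  · intro h
    obtain ⟨y, rfl⟩ : x ∈ Set.range b := by simpa using h 0
    refine ⟨y, fun n => ?_, rfl⟩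
    obtain ⟨w, hw⟩ := h n
    exact ⟨w, hb (by rw [← iterate_succ_apply' b, hw, h_comm.iterate_left n])⟩

theorem mem_bG_of_smul_mem_bG_general
    (R : Type*) [CommRing R] [Algebra ℂ R]
    (E : Type*) [AddCommGroup E] [Module R E] [Module ℂ E]
    (d : Derivation ℂ R R) (b : E →ₗ[R] E) (nab : E →ₗ[ℂ] E)
    (h_leibniz : ∀ (r : R) (x : E), nab (r • x) = d r • b x + r • nab x)
    (h_comm : ∀ x : E, nab (b x) = b (nab x))
    (hb : Function.Injective b)
    (G : Set E)
    (hG : G = {x : E | ∀ ν : ℕ, (⇑nab)^[ν] x ∈ Set.range ((⇑b)^[ν])})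
    (r : R)
    (hr : ∀ (ν : ℕ) (y : E), r • y ∈ Set.range ((⇑b)^[ν]) → y ∈ Set.range ((⇑b)^[ν]))
    (x : E) (hx : r • x ∈ ⇑b '' G) :
    x ∈ ⇑b '' G := by
  subst hG
  rw [mem_image_setOf_iterate_mem_range_iff hb h_comm] at hx ⊢
  intro n
  induction n using Nat.strong_induction_on with
  | _ n ih => exact hr (n + 1) _ ((smul_iterate_mem_range_iff h_leibniz h_comm ih r).2 (hx n))

/-- Part (4) of Proposition 2.3 of the paper: with `b` injective and `r` a
non-zero-divisor in the appropriate sense, if `x ∈ G` and `r • x ∈ b(G)`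
then `x ∈ b(G)`. -/
theorem mem_bG_of_smul_mem_bG
    (R : Type*) [CommRing R] [Algebra ℂ R]
    (E : Type*) [AddCommGroup E] [Module R E] [Module ℂ E] [IsScalarTower ℂ R E]
    (d : Derivation ℂ R R) (b : E →ₗ[R] E) (nab : E →ₗ[ℂ] E)
    (h_leibniz : ∀ (r : R) (x : E), nab (r • x) = d r • b x + r • nab x)
    (h_comm : ∀ x : E, nab (b x) = b (nab x))
    (hb : Function.Injective b)
    (G : Set E)
    (hG : G = {x : E | ∀ ν : ℕ, (⇑nab)^[ν] x ∈ Set.range ((⇑b)^[ν])})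
    (r : R)
    (hr : ∀ (ν : ℕ) (y : E), r • y ∈ Set.range ((⇑b)^[ν]) → y ∈ Set.range ((⇑b)^[ν]))
    (x : E) (hxG : x ∈ G) (hx : r • x ∈ ⇑b '' G) :
    x ∈ ⇑b '' G :=
  mem_bG_of_smul_mem_bG_general R E d b nab h_leibniz h_comm hb G hG r hr x hx
end

section
/- Let t ∈ ℂ with t ≠ 2 and t ≠ −2. Then the images in R/J_t of the nine monomials 1, X, Y, X², X·Y, Y², X²·Y, X·Y², X²·Y² form a basis of the quotient R/J_t as a ℂ-vector space; in particular dim_ℂ (R/J_t) = 9. -/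
/-!
Write `x, y` for the classes of `X, Y` in `R/J_t`. The generators of `J_t` say
`x³ = -(t/2)·xy²` and `y³ = -(t/2)·x²y`, and `2Y·∂f/∂X - tX·∂f/∂Y = (8 - 2t²)·X³Y`, so for
`t ≠ ±2` also `x³y = xy³ = 0`. Hence the span of the monomials `xᵃyᵇ` with `a, b ≤ 2` contains `1`
and is stable under multiplication by `x` and `y`, so it is all of `R/J_t`. For independence,
reading off the coefficients of the nine monomials after these reductions gives a linear map
`R → ℂ⁹` that kills `J_t` and sends the nine monomials to the standard basis.
-/

open MvPolynomial

theorem Submodule.span_eq_top_of_mul_mem {K A : Type*} [CommSemiring K] [Semiring A] [Algebra K A]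
    {s T : Set A} (hs : Algebra.adjoin K s = ⊤) (h1 : 1 ∈ span K T)
    (hmul : ∀ x ∈ s, ∀ y ∈ T, x * y ∈ span K T) : span K T = ⊤ := by
  have hgen : ∀ x ∈ s, ∀ y ∈ span K T, x * y ∈ span K T := by
    intro x hx y hy
    induction hy using Submodule.span_induction with
    | mem y hy => exact hmul x hx y hy
    | zero => simp
    | add y z _ _ hy hz => rw [mul_add]; exact add_mem hy hz
    | smul c y _ hy => rw [mul_smul_comm]; exact smul_mem _ c hy
  have hall : ∀ x : A, ∀ y ∈ span K T, x * y ∈ span K T := by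
    intro x
    have hx : x ∈ Algebra.adjoin K s := hs ▸ Algebra.mem_top
    induction hx using Algebra.adjoin_induction with
    | mem x hx => exact hgen x hx
    | algebraMap c => intro y hy; rw [← Algebra.smul_def]; exact smul_mem _ c hy
    | add x x' _ _ hx hx' => intro y hy; rw [add_mul]; exact add_mem (hx y hy) (hx' y hy)
    | mul x x' _ _ hx hx' => intro y hy; rw [mul_assoc]; exact hx _ (hx' y hy)
  exact eq_top_iff.mpr fun x _ => by simpa using hall x 1 h1

theorem MvPolynomial.adjoin_range_mk_X {σ R : Type*} [CommRing R] (I : Ideal (MvPolynomial σ R)) :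
    Algebra.adjoin R (Set.range fun i => Ideal.Quotient.mk I (X i)) = ⊤ := by
  rw [show (fun i => Ideal.Quotient.mk I (X i)) = Ideal.Quotient.mkₐ R I ∘ X from rfl,
    Set.range_comp, Algebra.adjoin_image, adjoin_range_X, Algebra.map_top,
    (AlgHom.range_eq_top _).mpr (Ideal.Quotient.mkₐ_surjective R I)]

namespace QuarticMilnor

variable (t : ℂ)

noncomputable def partialX : MvPolynomial (Fin 2) ℂ := 4 * X 0 ^ 3 + 2 * C t * X 0 * X 1 ^ 2

noncomputable def partialY : MvPolynomial (Fin 2) ℂ := 4 * X 1 ^ 3 + 2 * C t * X 0 ^ 2 * X 1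

noncomputable def jacobianIdeal : Ideal (MvPolynomial (Fin 2) ℂ) :=
  Ideal.span {partialX t, partialY t}

noncomputable def milnorMonomial : Fin 9 → MvPolynomial (Fin 2) ℂ :=
  ![1, X 0, X 1, X 0 ^ 2, X 0 * X 1, X 1 ^ 2, X 0 ^ 2 * X 1, X 0 * X 1 ^ 2, X 0 ^ 2 * X 1 ^ 2]

local notation "mk" => Ideal.Quotient.mk (jacobianIdeal t)

theorem partialX_mem : partialX t ∈ jacobianIdeal t := Ideal.subset_span (by simp)

theorem partialY_mem : partialY t ∈ jacobianIdeal t := Ideal.subset_span (by simp)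

theorem partialX_eq_smul : partialX t = (4 : ℂ) • X 0 ^ 3 + (2 * t) • (X 0 * X 1 ^ 2) := by
  simp only [partialX, smul_eq_C_mul, map_mul, map_ofNat]
  ring

theorem partialY_eq_smul : partialY t = (4 : ℂ) • X 1 ^ 3 + (2 * t) • (X 0 ^ 2 * X 1) := by
  simp only [partialY, smul_eq_C_mul, map_mul, map_ofNat]
  ring

theorem mk_X0_pow_three : mk (X 0 ^ 3) = (-(t / 2)) • mk (X 0 * X 1 ^ 2) := by
  have h : (4 : ℂ) • mk (X 0 ^ 3) + (2 * t) • mk (X 0 * X 1 ^ 2) = 0 := by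
    rw [← Ideal.Quotient.mkₐ_eq_mk ℂ, ← map_smul, ← map_smul, ← map_add, ← partialX_eq_smul,
      Ideal.Quotient.mkₐ_eq_mk, Ideal.Quotient.eq_zero_iff_mem]
    exact partialX_mem t
  linear_combination (norm := module) (1 / 4 : ℂ) • h

theorem mk_X1_pow_three : mk (X 1 ^ 3) = (-(t / 2)) • mk (X 0 ^ 2 * X 1) := by
  have h : (4 : ℂ) • mk (X 1 ^ 3) + (2 * t) • mk (X 0 ^ 2 * X 1) = 0 := by
    rw [← Ideal.Quotient.mkₐ_eq_mk ℂ, ← map_smul, ← map_smul, ← map_add, ← partialY_eq_smul,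
      Ideal.Quotient.mkₐ_eq_mk, Ideal.Quotient.eq_zero_iff_mem]
    exact partialY_mem t
  linear_combination (norm := module) (1 / 4 : ℂ) • h

def reducedMonomials : Set (MvPolynomial (Fin 2) ℂ ⧸ jacobianIdeal t) :=
  {y | ∃ a ≤ 2, ∃ b ≤ 2, mk (X 0 ^ a * X 1 ^ b) = y}

theorem span_reducedMonomials_le :
    Submodule.span ℂ (reducedMonomials t) ≤
      Submodule.span ℂ (Set.range fun i => mk (milnorMonomial i)) := by
  refine Submodule.span_le.mpr ?_
  rintro _ ⟨a, ha, b, hb, rfl⟩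
  apply Submodule.subset_span
  interval_cases a <;> interval_cases b <;> simp [milnorMonomial, Fin.exists_fin_succ]

noncomputable def expXY (a b : ℕ) : Fin 2 →₀ ℕ := Finsupp.single 0 a + Finsupp.single 1 b

@[simp] theorem expXY_apply_zero (a b : ℕ) : expXY a b 0 = a := by simp [expXY]

@[simp] theorem expXY_apply_one (a b : ℕ) : expXY a b 1 = b := by simp [expXY]

@[simp] theorem expXY_le_expXY_iff {a b a' b' : ℕ} :
    expXY a b ≤ expXY a' b' ↔ a ≤ a' ∧ b ≤ b' := by
  simp [Finsupp.le_def, Fin.forall_fin_two]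

@[simp] theorem expXY_sub_expXY (a b a' b' : ℕ) :
    expXY a b - expXY a' b' = expXY (a - a') (b - b') := by
  ext i
  fin_cases i <;> simp

theorem partialX_eq_monomial :
    partialX t = monomial (expXY 3 0) 4 + monomial (expXY 1 2) (2 * t) := by
  simp [partialX_eq_smul, expXY, X, monomial_pow, monomial_mul, smul_monomial]

theorem partialY_eq_monomial :
    partialY t = monomial (expXY 0 3) 4 + monomial (expXY 2 1) (2 * t) := by
  simp [partialY_eq_smul, expXY, X, monomial_pow, monomial_mul, smul_monomial]

-- Modulo `J_t`: `X³ ≡ -(t/2)·XY²`, `Y³ ≡ -(t/2)·X²Y` and `X⁴, Y⁴ ≡ -(t/2)·X²Y²`.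
noncomputable def reducedCoeffs : MvPolynomial (Fin 2) ℂ →ₗ[ℂ] Fin 9 → ℂ :=
  LinearMap.pi ![lcoeff ℂ (expXY 0 0), lcoeff ℂ (expXY 1 0), lcoeff ℂ (expXY 0 1),
    lcoeff ℂ (expXY 2 0), lcoeff ℂ (expXY 1 1), lcoeff ℂ (expXY 0 2),
    lcoeff ℂ (expXY 2 1) - (t / 2) • lcoeff ℂ (expXY 0 3),
    lcoeff ℂ (expXY 1 2) - (t / 2) • lcoeff ℂ (expXY 3 0),
    lcoeff ℂ (expXY 2 2) - (t / 2) • (lcoeff ℂ (expXY 4 0) + lcoeff ℂ (expXY 0 4))]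

theorem reducedCoeffs_mul_partialX (u : MvPolynomial (Fin 2) ℂ) :
    reducedCoeffs t (u * partialX t) = 0 := by
  funext j
  fin_cases j <;>
    simp [reducedCoeffs, partialX_eq_monomial, mul_add, coeff_mul_monomial'] <;> ring

theorem reducedCoeffs_mul_partialY (u : MvPolynomial (Fin 2) ℂ) :
    reducedCoeffs t (u * partialY t) = 0 := by
  funext j
  fin_cases j <;>
    simp [reducedCoeffs, partialY_eq_monomial, mul_add, coeff_mul_monomial'] <;> ring

theorem jacobianIdeal_le_ker_reducedCoeffs :
    (jacobianIdeal t).restrictScalars ℂ ≤ LinearMap.ker (reducedCoeffs t) := by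
  intro p hp
  obtain ⟨u, v, rfl⟩ := Ideal.mem_span_pair.mp hp
  simp [reducedCoeffs_mul_partialX, reducedCoeffs_mul_partialY]

theorem reducedCoeffs_milnorMonomial (i : Fin 9) :
    reducedCoeffs t (milnorMonomial i) = Pi.single i 1 := by
  fin_cases i <;> funext j <;> fin_cases j <;>
    simp [reducedCoeffs, milnorMonomial, X, monomial_pow, monomial_mul, coeff_monomial, coeff_one,
      Finsupp.ext_iff, Fin.forall_fin_two]

theorem linearIndependent_mk_milnorMonomial :
    LinearIndependent ℂ fun i => mk (milnorMonomial i) := by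
  let L := ((jacobianIdeal t).restrictScalars ℂ).liftQ (reducedCoeffs t)
    (jacobianIdeal_le_ker_reducedCoeffs t) ∘ₗ
      (Submodule.Quotient.restrictScalarsEquiv ℂ (jacobianIdeal t)).symm.toLinearMap
  have hL : L ∘ (fun i => mk (milnorMonomial i)) = fun i => Pi.single i 1 :=
    funext (reducedCoeffs_milnorMonomial t)
  exact .of_comp L (hL ▸ Pi.linearIndependent_single_one (Fin 9) ℂ)

variable {t}

theorem X0_pow_three_mul_X1_mem (ht : t ^ 2 ≠ 4) : X 0 ^ 3 * X 1 ∈ jacobianIdeal t := by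
  have hu : IsUnit (C (8 - 2 * t ^ 2) : MvPolynomial (Fin 2) ℂ) :=
    (IsUnit.mk0 _ fun h => ht (by linear_combination -h / 2)).map C
  have hcomb : C (8 - 2 * t ^ 2) * (X 0 ^ 3 * X 1) =
      2 * X 1 * partialX t - C t * X 0 * partialY t := by
    simp only [partialX, partialY, map_sub, map_mul, map_ofNat, map_pow]
    ring
  rw [← Ideal.unit_mul_mem_iff_mem _ hu, hcomb]
  exact sub_mem (Ideal.mul_mem_left _ _ (partialX_mem t))
    (Ideal.mul_mem_left _ _ (partialY_mem t))

theorem X0_mul_X1_pow_three_mem (ht : t ^ 2 ≠ 4) : X 0 * X 1 ^ 3 ∈ jacobianIdeal t := by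
  have hu : IsUnit (C (8 - 2 * t ^ 2) : MvPolynomial (Fin 2) ℂ) :=
    (IsUnit.mk0 _ fun h => ht (by linear_combination -h / 2)).map C
  have hcomb : C (8 - 2 * t ^ 2) * (X 0 * X 1 ^ 3) =
      2 * X 0 * partialY t - C t * X 1 * partialX t := by
    simp only [partialX, partialY, map_sub, map_mul, map_ofNat, map_pow]
    ring
  rw [← Ideal.unit_mul_mem_iff_mem _ hu, hcomb]
  exact sub_mem (Ideal.mul_mem_left _ _ (partialY_mem t))
    (Ideal.mul_mem_left _ _ (partialX_mem t))

theorem X0_mul_mem_span_reducedMonomials (ht : t ^ 2 ≠ 4) {a b : ℕ} (ha : a ≤ 2) (hb : b ≤ 2) :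
    mk (X 0 * (X 0 ^ a * X 1 ^ b)) ∈ Submodule.span ℂ (reducedMonomials t) := by
  rcases ha.lt_or_eq with ha | rfl
  · exact Submodule.subset_span ⟨a + 1, ha, b, hb, by ring_nf⟩
  rcases b with _ | b
  · rw [show X 0 * (X 0 ^ 2 * X 1 ^ 0) = (X 0 ^ 3 : MvPolynomial (Fin 2) ℂ) by ring,
      mk_X0_pow_three]
    exact Submodule.smul_mem _ _ (Submodule.subset_span ⟨1, by norm_num, 2, le_rfl, by ring_nf⟩)
  · rw [Ideal.Quotient.eq_zero_iff_mem.mpr]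
    · exact zero_mem _
    rw [show X 0 * (X 0 ^ 2 * X 1 ^ (b + 1)) =
      X 1 ^ b * (X 0 ^ 3 * X 1 : MvPolynomial (Fin 2) ℂ) by ring]
    exact Ideal.mul_mem_left _ _ (X0_pow_three_mul_X1_mem ht)

theorem X1_mul_mem_span_reducedMonomials (ht : t ^ 2 ≠ 4) {a b : ℕ} (ha : a ≤ 2) (hb : b ≤ 2) :
    mk (X 1 * (X 0 ^ a * X 1 ^ b)) ∈ Submodule.span ℂ (reducedMonomials t) := by
  rcases hb.lt_or_eq with hb | rfl
  · exact Submodule.subset_span ⟨a, ha, b + 1, hb, by ring_nf⟩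
  rcases a with _ | a
  · rw [show X 1 * (X 0 ^ 0 * X 1 ^ 2) = (X 1 ^ 3 : MvPolynomial (Fin 2) ℂ) by ring,
      mk_X1_pow_three]
    exact Submodule.smul_mem _ _ (Submodule.subset_span ⟨2, le_rfl, 1, by norm_num, by ring_nf⟩)
  · rw [Ideal.Quotient.eq_zero_iff_mem.mpr]
    · exact zero_mem _
    rw [show X 1 * (X 0 ^ (a + 1) * X 1 ^ 2) =
      X 0 ^ a * (X 0 * X 1 ^ 3 : MvPolynomial (Fin 2) ℂ) by ring]
    exact Ideal.mul_mem_left _ _ (X0_mul_X1_pow_three_mem ht)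

theorem span_reducedMonomials (ht : t ^ 2 ≠ 4) :
    Submodule.span ℂ (reducedMonomials t) = ⊤ := by
  refine Submodule.span_eq_top_of_mul_mem (adjoin_range_mk_X _)
    (Submodule.subset_span ⟨0, zero_le_two, 0, zero_le_two, by simp⟩) ?_
  rintro _ ⟨i, rfl⟩ _ ⟨a, ha, b, hb, rfl⟩
  rw [← map_mul]
  fin_cases i
  · exact X0_mul_mem_span_reducedMonomials ht ha hb
  · exact X1_mul_mem_span_reducedMonomials ht ha hb

theorem exists_basis_mk_milnorMonomial (ht : t ^ 2 ≠ 4) :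
    ∃ B : Module.Basis (Fin 9) ℂ (MvPolynomial (Fin 2) ℂ ⧸ jacobianIdeal t),
      ∀ i, B i = mk (milnorMonomial i) :=
  ⟨.mk (linearIndependent_mk_milnorMonomial t)
      ((span_reducedMonomials ht).symm.le.trans (span_reducedMonomials_le t)),
    Module.Basis.mk_apply _ _⟩

theorem finrank_quotient_jacobianIdeal (ht : t ^ 2 ≠ 4) :
    Module.finrank ℂ (MvPolynomial (Fin 2) ℂ ⧸ jacobianIdeal t) = 9 := by
  obtain ⟨B, -⟩ := exists_basis_mk_milnorMonomial ht
  rw [Module.finrank_eq_card_basis B, Fintype.card_fin]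

end QuarticMilnor

/-- Example 2 of the paper: for `f_t = X⁴ + Y⁴ + t·X²Y²` with `t ≠ ±2`, the nine
monomials `1, X, Y, X², XY, Y², X²Y, XY², X²Y²` induce a `ℂ`-basis of the Milnor
algebra `R/J_t`; in particular `dim_ℂ R/J_t = 9`. -/
theorem milnor_algebra_basis (t : ℂ) (ht2 : t ≠ 2) (ht2' : t ≠ -2) :
    let R := MvPolynomial (Fin 2) ℂ
    let fx : R := 4 * X 0 ^ 3 + 2 * C t * X 0 * X 1 ^ 2
    let fy : R := 4 * X 1 ^ 3 + 2 * C t * X 0 ^ 2 * X 1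
    let J : Ideal R := Ideal.span {fx, fy}
    let m : Fin 9 → R :=
      ![1, X 0, X 1, X 0 ^ 2, X 0 * X 1, X 1 ^ 2,
        X 0 ^ 2 * X 1, X 0 * X 1 ^ 2, X 0 ^ 2 * X 1 ^ 2]
    (∃ B : Module.Basis (Fin 9) ℂ (R ⧸ J), ∀ i, B i = Ideal.Quotient.mk J (m i)) ∧
      Module.finrank ℂ (R ⧸ J) = 9 := by
  have ht : t ^ 2 ≠ 4 := by
    rw [show (4 : ℂ) = 2 ^ 2 by norm_num, Ne, sq_eq_sq_iff_eq_or_eq_neg]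
    tauto
  exact ⟨QuarticMilnor.exists_basis_mk_milnorMonomial ht,
    QuarticMilnor.finrank_quotient_jacobianIdeal ht⟩
end

section
/- Let t ∈ ℂ with t ≠ 2 and t ≠ −2. Then the six monomials X³·Y, X·Y³, X⁵, Y⁵, X³·Y², X²·Y³ all belong to the ideal J_t. -/
/-! When `2(4 - t²)` is invertible, the identities
`2(4 - t²)·x³y = 2y·∂ₓf - tx·∂ᵧf` and `4x⁵ = x²·∂ₓf - 2ty·x³y`
put `x³y` and then `x⁵` into the Jacobian ideal of `f = x⁴ + y⁴ + t·x²y²`;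
the remaining monomials are multiples of these or their images under `x ↔ y`. -/

open MvPolynomial

section QuarticJacobian

variable {A : Type*} [CommRing A]

/-- The ideal generated by the partial derivatives of `x⁴ + y⁴ + t·x²y²`. -/
def quarticJacobianIdeal (t x y : A) : Ideal A :=
  Ideal.span {4 * x ^ 3 + 2 * t * x * y ^ 2, 4 * y ^ 3 + 2 * t * x ^ 2 * y}

theorem quarticJacobianIdeal_comm (t x y : A) :
    quarticJacobianIdeal t y x = quarticJacobianIdeal t x y := by
  rw [quarticJacobianIdeal, quarticJacobianIdeal, Set.pair_comm]
  ring_nf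

variable {t : A} (x y : A)

theorem pow_three_mul_mem_quarticJacobianIdeal (hu : IsUnit (2 * (4 - t ^ 2))) :
    x ^ 3 * y ∈ quarticJacobianIdeal t x y := by
  rw [← Ideal.unit_mul_mem_iff_mem _ hu, quarticJacobianIdeal, Ideal.mem_span_pair]
  exact ⟨2 * y, -(t * x), by ring⟩

theorem pow_five_mem_quarticJacobianIdeal (hu : IsUnit (2 * (4 - t ^ 2))) :
    x ^ 5 ∈ quarticJacobianIdeal t x y := by
  have h4 : IsUnit (4 : A) := by
    have h2 : IsUnit (2 : A) := isUnit_of_mul_isUnit_left hu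
    rw [show (4 : A) = 2 * 2 by norm_num]
    exact h2.mul h2
  have hx3y := pow_three_mul_mem_quarticJacobianIdeal x y hu
  have hfx : 4 * x ^ 3 + 2 * t * x * y ^ 2 ∈ quarticJacobianIdeal t x y :=
    Ideal.subset_span (Set.mem_insert _ _)
  rw [← Ideal.unit_mul_mem_iff_mem _ h4]
  have : 4 * x ^ 5 = x ^ 2 * (4 * x ^ 3 + 2 * t * x * y ^ 2) - 2 * t * y * (x ^ 3 * y) := by
    ring
  rw [this]
  exact sub_mem (Ideal.mul_mem_left _ _ hfx) (Ideal.mul_mem_left _ _ hx3y)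

end QuarticJacobian

/-- Example 2 of the paper: for `t ≠ ±2`, the monomials `X³Y, XY³, X⁵, Y⁵, X³Y², X²Y³`
belong to the Jacobian ideal `J_t` of `f_t = X⁴ + Y⁴ + t·X²Y²`. -/
theorem monomials_mem_jacobian_ideal (t : ℂ) (ht2 : t ≠ 2) (ht2' : t ≠ -2) :
    let R := MvPolynomial (Fin 2) ℂ
    let fx : R := 4 * X 0 ^ 3 + 2 * C t * X 0 * X 1 ^ 2
    let fy : R := 4 * X 1 ^ 3 + 2 * C t * X 0 ^ 2 * X 1
    let J : Ideal R := Ideal.span {fx, fy}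
    X 0 ^ 3 * X 1 ∈ J ∧ X 0 * X 1 ^ 3 ∈ J ∧ X 0 ^ 5 ∈ J ∧ X 1 ^ 5 ∈ J ∧
      X 0 ^ 3 * X 1 ^ 2 ∈ J ∧ X 0 ^ 2 * X 1 ^ 3 ∈ J := by
  intro R fx fy J
  have hJ : J = quarticJacobianIdeal (C t) (X 0) (X 1) := rfl
  have hJ' : J = quarticJacobianIdeal (C t) (X 1) (X 0) := by
    rw [hJ, quarticJacobianIdeal_comm]
  have hu : IsUnit (2 * (4 - C t ^ 2) : R) := by
    have hne : (2 * (4 - t ^ 2) : ℂ) ≠ 0 := by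
      have : (2 * (4 - t ^ 2) : ℂ) = 2 * ((2 - t) * (2 + t)) := by ring
      rw [this]
      exact mul_ne_zero two_ne_zero
        (mul_ne_zero (sub_ne_zero.mpr ht2.symm) fun h => ht2' (eq_neg_of_add_eq_zero_right h))
    simpa only [map_mul, map_sub, map_pow, map_ofNat] using
      (isUnit_iff_ne_zero.mpr hne).map (C : ℂ →+* R)
  have hx3y : X 0 ^ 3 * X 1 ∈ J := hJ ▸ pow_three_mul_mem_quarticJacobianIdeal _ _ hu
  have hxy3 : X 0 * X 1 ^ 3 ∈ J := by
    rw [mul_comm, hJ']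
    exact pow_three_mul_mem_quarticJacobianIdeal _ _ hu
  refine ⟨hx3y, hxy3, hJ ▸ pow_five_mem_quarticJacobianIdeal _ _ hu,
    hJ' ▸ pow_five_mem_quarticJacobianIdeal _ _ hu, ?_, ?_⟩
  · simpa [pow_succ, mul_assoc] using J.mul_mem_right (X 1) hx3y
  · simpa [pow_succ, mul_assoc, mul_left_comm] using J.mul_mem_left (X 0) hxy3
end

section
/- In the polynomial ring ℂ[X,Y] = MvPolynomial (Fin 2) ℂ, set P := X⁴ + Y⁴ and Q := X²·Y², let 𝔪 := Ideal.span {X, Y}, J(P) := Ideal.span {4X³, 4Y³} (the ideal of partial derivatives of P) and J(Q) := Ideal.span {2XY², 2X²Y} (the ideal of partial derivatives of Q). Then 𝔪²·J(Q) ⊆ 𝔪²·J(P), and Q ∉ J(P), i.e. X²Y² ∉ Ideal.span {X³, Y³}. -/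
/-!
With `𝔪 = (x, y)`, the products of generators of `𝔪²·(xy², x²y)` are monomials `xⁱyʲ` with
`i + j = 5`, so `i ≥ 3` or `j ≥ 3`, and such a monomial is a degree-2 monomial (in `𝔪²`) times `x³`
or `y³`. The constants `4` and `2` in the Jacobian ideals are units and can be dropped.
On the other hand `(X³, Y³)` is a monomial ideal, and `X²Y²` is divisible by neither generator.
-/

open MvPolynomial Pointwise

theorem Ideal.span_pair_mul_left_unit {R : Type*} [CommSemiring R] {u : R} (hu : IsUnit u)
    (a b : R) : Ideal.span {u * a, u * b} = Ideal.span {a, b} := by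
  rw [Ideal.span_insert, Ideal.span_insert, Ideal.span_singleton_mul_left_unit hu,
    Ideal.span_singleton_mul_left_unit hu]

section

variable {R : Type*} [CommSemiring R] (x y : R)

theorem pow_mul_pow_mem_span_pair_pow (i j : ℕ) :
    x ^ i * y ^ j ∈ Ideal.span {x, y} ^ (i + j) := by
  rw [pow_add]
  exact Ideal.mul_mem_mul (Ideal.pow_mem_pow (Ideal.subset_span (by simp)) i)
    (Ideal.pow_mem_pow (Ideal.subset_span (by simp)) j)

theorem pow_mul_pow_mem_span_pair_sq_mul_span_cubes {i j : ℕ} (h : i + j = 5) :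
    x ^ i * y ^ j ∈ Ideal.span {x, y} ^ 2 * Ideal.span {x ^ 3, y ^ 3} := by
  rcases le_or_gt 3 i with hi | hi
  · obtain ⟨k, rfl⟩ := Nat.exists_eq_add_of_le' hi
    have hk : k + j = 2 := by omega
    rw [pow_add, mul_right_comm, ← hk]
    exact Ideal.mul_mem_mul (pow_mul_pow_mem_span_pair_pow x y k j) (Ideal.subset_span (by simp))
  · obtain ⟨k, rfl⟩ := Nat.exists_eq_add_of_le' (show 3 ≤ j by omega)
    have hk : i + k = 2 := by omega
    rw [pow_add, ← mul_assoc, ← hk]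
    exact Ideal.mul_mem_mul (pow_mul_pow_mem_span_pair_pow x y i k) (Ideal.subset_span (by simp))

theorem span_pair_sq_mul_span_mixed_cubes_le :
    Ideal.span {x, y} ^ 2 * Ideal.span {x * y ^ 2, x ^ 2 * y} ≤
      Ideal.span {x, y} ^ 2 * Ideal.span {x ^ 3, y ^ 3} := by
  have hdeg5 {z : R} {i j : ℕ} (h : i + j = 5) (hz : z = x ^ i * y ^ j) :
      z ∈ Ideal.span {x, y} ^ 2 * Ideal.span {x ^ 3, y ^ 3} :=
    hz ▸ pow_mul_pow_mem_span_pair_sq_mul_span_cubes x y h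
  calc Ideal.span {x, y} ^ 2 * Ideal.span {x * y ^ 2, x ^ 2 * y}
      = Ideal.span ({x * x, x * y, y * x, y * y} * {x * y ^ 2, x ^ 2 * y}) := by
        rw [sq, Ideal.span_pair_mul_span_pair, Ideal.span_mul_span']
    _ ≤ _ := Ideal.span_le.2 ?_
  rintro _ ⟨a, ha, b, hb, rfl⟩
  rw [SetLike.mem_coe]
  simp only [Set.mem_insert_iff, Set.mem_singleton_iff] at ha hb
  rcases ha with rfl | rfl | rfl | rfl <;> rcases hb with rfl | rfl <;>
    first
    | exact hdeg5 (i := 1) (j := 4) rfl (by ring1)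
    | exact hdeg5 (i := 2) (j := 3) rfl (by ring1)
    | exact hdeg5 (i := 3) (j := 2) rfl (by ring1)
    | exact hdeg5 (i := 4) (j := 1) rfl (by ring1)

end

theorem MvPolynomial.X_pow_mul_X_pow_notMem_span_pow_succ {R σ : Type*} [CommSemiring R]
    [Nontrivial R] {i j : σ} (hij : i ≠ j) (a b : ℕ) :
    X i ^ a * X j ^ b ∉
      Ideal.span ({X i ^ (a + 1), X j ^ (b + 1)} : Set (MvPolynomial σ R)) := by
  have hmon : ({X i ^ (a + 1), X j ^ (b + 1)} : Set (MvPolynomial σ R)) =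
      (fun s => monomial s (1 : R)) '' {Finsupp.single i (a + 1), Finsupp.single j (b + 1)} := by
    simp [Set.image_pair, X_pow_eq_monomial]
  rw [hmon, mem_ideal_span_monomial_image]
  simp only [X_pow_eq_monomial, monomial_mul, one_mul]
  intro h
  obtain ⟨s, hs, hle⟩ :=
    h (Finsupp.single i a + Finsupp.single j b) (by classical simp [support_monomial])
  rcases hs with rfl | rfl <;> rw [Finsupp.single_le_iff] at hle
  · simp [Finsupp.single_eq_of_ne hij] at hle
  · simp [Finsupp.single_eq_of_ne hij.symm] at hle

/-- Verification of the hypothesis of the Lemma of Example 1 for Example 2 of the paper: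
with `P = X⁴ + Y⁴`, `Q = X²Y²`, one has `𝔪²·J(Q) ⊆ 𝔪²·J(P)` and `Q ∉ J(P)`. -/
theorem example2_hypotheses :
    let R := MvPolynomial (Fin 2) ℂ
    let 𝔪 : Ideal R := Ideal.span {X 0, X 1}
    let JP : Ideal R := Ideal.span {4 * X 0 ^ 3, 4 * X 1 ^ 3}
    let JQ : Ideal R := Ideal.span {2 * X 0 * X 1 ^ 2, 2 * X 0 ^ 2 * X 1}
    𝔪 ^ 2 * JQ ≤ 𝔪 ^ 2 * JP ∧
      X 0 ^ 2 * X 1 ^ 2 ∉ Ideal.span ({X 0 ^ 3, X 1 ^ 3} : Set R) := by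
  dsimp only
  have isUnit_ofNat (n : ℕ) [n.AtLeastTwo] : IsUnit (OfNat.ofNat n : MvPolynomial (Fin 2) ℂ) := by
    simpa only [map_ofNat] using (IsUnit.mk0 (OfNat.ofNat n : ℂ) (by simp)).map C
  rw [Ideal.span_pair_mul_left_unit (isUnit_ofNat 4), mul_assoc, mul_assoc,
    Ideal.span_pair_mul_left_unit (isUnit_ofNat 2)]
  exact ⟨span_pair_sq_mul_span_mixed_cubes_le _ _,
    X_pow_mul_X_pow_notMem_span_pow_succ (by decide) 2 2⟩
end

section
/- Let p, q, r ≥ 3 be integers. In A = MvPolynomial (Fin 4) ℂ one has t³·x·y·z² + (p·q·r)·x^{p−2}·y^{q−2}·z^{r−1} ∈ 𝔐²·J. -/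
/-!
The left-hand side is an explicit combination of the partial derivatives,
`pq·x^{p−2}y^{q−2}·f_z + t²yz·f_y − q·t·y^{q−1}·f_x`:
the terms `pq·t·x^{p−1}y^{q−1}` and `q·t²·y^q z` cancel in pairs.
For `p, q ≥ 3` all three coefficients are divisible by two of the variables `x, y, z`,
hence lie in `𝔐²`.
-/

open MvPolynomial

namespace Ideal

variable {R : Type*} [CommSemiring R] {I : Ideal R} {a b : R}

theorem pow_mul_pow_mem_sq (ha : a ∈ I) (hb : b ∈ I) {m n : ℕ} (hm : 1 ≤ m) (hn : 1 ≤ n) :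
    a ^ m * b ^ n ∈ I ^ 2 :=
  pow_le_pow_right (show 2 ≤ m + n by omega) (pow_add I m n ▸
    mul_mem_mul (pow_mem_pow ha m) (pow_mem_pow hb n))

theorem pow_mem_sq (ha : a ∈ I) {n : ℕ} (hn : 2 ≤ n) : a ^ n ∈ I ^ 2 :=
  pow_le_pow_right hn (pow_mem_pow ha n)

end Ideal

theorem example3_relation_eq_partials_combination {R : Type*} [CommRing R] (x y z t : R)
    {p q : ℕ} (r : ℕ) (hp : 2 ≤ p) (hq : 2 ≤ q) :
    t ^ 3 * (x * y * z ^ 2) + (p * q * r : R) * (x ^ (p - 2) * y ^ (q - 2) * z ^ (r - 1)) =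
      (p * q : R) * (x ^ (p - 2) * y ^ (q - 2)) * (r * z ^ (r - 1) + t * x * y)
        + t ^ 2 * (y * z) * (q * y ^ (q - 1) + t * x * z)
        - q * t * y ^ (q - 1) * (p * x ^ (p - 1) + t * y * z) := by
  obtain ⟨a, rfl⟩ := Nat.exists_eq_add_of_le' hp
  obtain ⟨b, rfl⟩ := Nat.exists_eq_add_of_le' hq
  simp only [Nat.add_sub_cancel, Nat.add_succ_sub_one]
  ring

theorem example3_key_congruence_general (p q r : ℕ) (hp : 3 ≤ p) (hq : 3 ≤ q) :
    let A := MvPolynomial (Fin 4) ℂ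
    let x : A := X 0
    let y : A := X 1
    let z : A := X 2
    let t : A := X 3
    let fx : A := (p : A) * x ^ (p - 1) + t * y * z
    let fy : A := (q : A) * y ^ (q - 1) + t * x * z
    let fz : A := (r : A) * z ^ (r - 1) + t * x * y
    let 𝔐 : Ideal A := Ideal.span {x, y, z}
    let J : Ideal A := Ideal.span {fx, fy, fz}
    t ^ 3 * (x * y * z ^ 2) + (p * q * r : ℕ) • (x ^ (p - 2) * y ^ (q - 2) * z ^ (r - 1))
      ∈ 𝔐 ^ 2 * J := by
  intro A x y z t fx fy fz 𝔐 J
  have hx : x ∈ 𝔐 := Ideal.subset_span (by simp)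
  have hy : y ∈ 𝔐 := Ideal.subset_span (by simp)
  have hz : z ∈ 𝔐 := Ideal.subset_span (by simp)
  have hfx : fx ∈ J := Ideal.subset_span (by simp)
  have hfy : fy ∈ J := Ideal.subset_span (by simp)
  have hfz : fz ∈ J := Ideal.subset_span (by simp)
  rw [nsmul_eq_mul, Nat.cast_mul, Nat.cast_mul,
    example3_relation_eq_partials_combination x y z t r (by omega) (by omega)]
  refine sub_mem (add_mem (Ideal.mul_mem_mul ?_ hfz) (Ideal.mul_mem_mul ?_ hfy))
    (Ideal.mul_mem_mul ?_ hfx)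
  · exact Ideal.mul_mem_left _ _ (Ideal.pow_mul_pow_mem_sq hx hy (by omega) (by omega))
  · exact Ideal.mul_mem_left _ _ (sq 𝔐 ▸ Ideal.mul_mem_mul hy hz)
  · exact Ideal.mul_mem_left _ _ (Ideal.pow_mem_sq hy (by omega))

/-- Relation (@) of Example 3 of the paper:
`t³·xyz² + pqr·x^{p−2}·y^{q−2}·z^{r−1} ∈ 𝔐²·J` for `f = x^p + y^q + z^r + t·xyz`,
`p,q,r ≥ 3`. -/
theorem example3_key_congruence (p q r : ℕ) (hp : 3 ≤ p) (hq : 3 ≤ q) (hr : 3 ≤ r) :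
    let A := MvPolynomial (Fin 4) ℂ
    let x : A := X 0
    let y : A := X 1
    let z : A := X 2
    let t : A := X 3
    let fx : A := (p : A) * x ^ (p - 1) + t * y * z
    let fy : A := (q : A) * y ^ (q - 1) + t * x * z
    let fz : A := (r : A) * z ^ (r - 1) + t * x * y
    let 𝔐 : Ideal A := Ideal.span {x, y, z}
    let J : Ideal A := Ideal.span {fx, fy, fz}
    t ^ 3 * (x * y * z ^ 2) + (p * q * r : ℕ) • (x ^ (p - 2) * y ^ (q - 2) * z ^ (r - 1))
      ∈ 𝔐 ^ 2 * J :=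
  example3_key_congruence_general p q r hp hq
end

section
/- Let p, q, r ≥ 3 be integers with 1/p + 1/q + 1/r < 1, and let c ∈ ℂ with c ≠ 0. Let R = MvPolynomial (Fin 3) ℂ with variables x, y, z, let f := x^p + y^q + z^r + c·x·y·z, let 𝔭 := Ideal.span {x, y, z} (a prime ideal of R), let S := Localization.AtPrime R 𝔭 with canonical map φ : R → S, let 𝔪 be the maximal ideal of the local ring S, and let J := Ideal.span {φ(f_x), φ(f_y), φ(f_z)} where f_x = p·x^{p−1} + c·y·z, f_y = q·y^{q−1} + c·x·z, f_z = r·z^{r−1} + c·x·y. Then 𝔪·Ideal.span {φ(x·y·z)} ⊆ 𝔪²·J and 𝔪·Ideal.span {φ(f)} ⊆ 𝔪²·J. -/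
/-!
Modulo the Jacobian ideal `J` one has `c·yz ≡ -p x^(p-1)`, `c·xz ≡ -q y^(q-1)` and
`c·xy ≡ -r z^(r-1)`, hence
`c³·x²yz = c·(cxy)(cxz) ≡ qr y^(q-2) z^(r-2)·(c yz) ≡ -pqr x^(p-1) y^(q-2) z^(r-2)`,
where every multiplier of a generator of `J` lies in `𝔪²`. So
`(c³ + pqr x^(p-3) y^(q-3) z^(r-3))·x²yz ∈ 𝔪²J`, and the bracket is a unit of the local ring as
soon as one exponent exceeds `3`, which is what `1/p + 1/q + 1/r < 1` guarantees. By symmetry the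
same holds for `y·xyz` and `z·xyz`, so `𝔪·xyz ⊆ 𝔪²J`. For `f`, the Euler relation
`pqr·f = qr x f_x + pr y f_y + pq z f_z + c (pqr - qr - pr - pq) xyz`
puts `𝔪·f` inside `𝔪²J + 𝔪·xyz`.
-/

open MvPolynomial

theorem Ideal.span_mul_span_singleton_le {S : Type*} [CommRing S] {s : Set S} {w : S}
    {I : Ideal S} (h : ∀ t ∈ s, t * w ∈ I) : Ideal.span s * Ideal.span {w} ≤ I := by
  rw [Ideal.span_mul_span', Ideal.span_le, Set.mul_singleton]
  rintro _ ⟨t, ht, rfl⟩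
  exact h t ht

theorem IsLocalRing.isUnit_add_of_mem_maximalIdeal {S : Type*} [CommRing S] [IsLocalRing S]
    {u m : S} (hu : IsUnit u) (hm : m ∈ maximalIdeal S) : IsUnit (u + m) :=
  notMem_maximalIdeal.mp fun h ↦ notMem_maximalIdeal.mpr hu (by simpa using sub_mem h hm)

namespace Tpqr

variable {S : Type*} [CommRing S]

/-- The relative Jacobian ideal of `x ^ p + y ^ q + z ^ r + c * (x * y * z)`. -/
def jacobianIdeal (p q r : ℕ) (c x y z : S) : Ideal S :=
  Ideal.span {p * x ^ (p - 1) + c * (y * z), q * y ^ (q - 1) + c * (x * z),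
    r * z ^ (r - 1) + c * (x * y)}

variable {M : Ideal S} {p q r : ℕ} {c x y z : S}

theorem jacobianIdeal_swap_xy :
    jacobianIdeal q p r c y x z = jacobianIdeal p q r c x y z := by
  rw [jacobianIdeal, jacobianIdeal, Set.insert_comm, mul_comm y x]

theorem jacobianIdeal_swap_xz :
    jacobianIdeal r q p c z y x = jacobianIdeal p q r c x y z := by
  rw [jacobianIdeal, jacobianIdeal, mul_comm z y, mul_comm z x, mul_comm y x, Set.insert_comm,
    Set.pair_comm, Set.insert_comm]

theorem mul_xyz_mem_sq_mul_jacobianIdeal (hp : 3 ≤ p) (hq : 3 ≤ q) (hr : 3 ≤ r)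
    (hx : x ∈ M) (hy : y ∈ M) (hz : z ∈ M)
    (hu : IsUnit (c ^ 3 + p * q * r * (x ^ (p - 3) * y ^ (q - 3) * z ^ (r - 3)))) :
    x * (x * y * z) ∈ M ^ 2 * jacobianIdeal p q r c x y z := by
  obtain ⟨a, rfl⟩ := Nat.exists_eq_add_of_le' hp
  obtain ⟨b, rfl⟩ := Nat.exists_eq_add_of_le' hq
  obtain ⟨d, rfl⟩ := Nat.exists_eq_add_of_le' hr
  simp only [jacobianIdeal, Nat.add_sub_cancel, show ∀ n, n + 3 - 1 = n + 2 from fun _ ↦ rfl]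
    at hu ⊢
  have hsq {u v : S} (hum : u ∈ M) (hvm : v ∈ M) (w : S) : w * (u * v) ∈ M ^ 2 :=
    Ideal.mul_mem_left _ _ (sq M ▸ Ideal.mul_mem_mul hum hvm)
  rw [← Ideal.unit_mul_mem_iff_mem _ hu]
  have hcombination : (c ^ 3 + (a + 3 : ℕ) * (b + 3 : ℕ) * (d + 3 : ℕ) * (x ^ a * y ^ b * z ^ d)) *
      (x * (x * y * z)) =
      c ^ 2 * (x * z) * ((d + 3 : ℕ) * z ^ (d + 2) + c * (x * y))
      - c * (d + 3 : ℕ) * z ^ d * (z * z) * ((b + 3 : ℕ) * y ^ (b + 2) + c * (x * z))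
      + (b + 3 : ℕ) * (d + 3 : ℕ) * y ^ b * z ^ d * (y * z) *
        ((a + 3 : ℕ) * x ^ (a + 2) + c * (y * z)) := by
    ring
  rw [hcombination]
  exact add_mem
    (sub_mem (Ideal.mul_mem_mul (hsq hx hz _) (Ideal.subset_span (by simp)))
      (Ideal.mul_mem_mul (hsq hz hz _) (Ideal.subset_span (by simp))))
    (Ideal.mul_mem_mul (hsq hy hz _) (Ideal.subset_span (by simp)))

theorem span_mul_span_xyz_le (hp : 3 ≤ p) (hq : 3 ≤ q) (hr : 3 ≤ r)
    (hx : x ∈ M) (hy : y ∈ M) (hz : z ∈ M)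
    (hu : IsUnit (c ^ 3 + p * q * r * (x ^ (p - 3) * y ^ (q - 3) * z ^ (r - 3)))) :
    Ideal.span {x, y, z} * Ideal.span {x * y * z} ≤ M ^ 2 * jacobianIdeal p q r c x y z := by
  refine Ideal.span_mul_span_singleton_le ?_
  simp only [Set.mem_insert_iff, Set.mem_singleton_iff, forall_eq_or_imp, forall_eq]
  refine ⟨mul_xyz_mem_sq_mul_jacobianIdeal hp hq hr hx hy hz hu, ?_, ?_⟩
  · rw [← jacobianIdeal_swap_xy]
    convert mul_xyz_mem_sq_mul_jacobianIdeal hq hp hr hy hx hz (by convert hu using 2; ring)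
      using 2
    ring
  · rw [← jacobianIdeal_swap_xz]
    convert mul_xyz_mem_sq_mul_jacobianIdeal hr hq hp hz hy hx (by convert hu using 2; ring)
      using 2
    ring

theorem mul_span_le_sq_mul_jacobianIdeal (hp : p ≠ 0) (hq : q ≠ 0) (hr : r ≠ 0)
    (hx : x ∈ M) (hy : y ∈ M) (hz : z ∈ M) (hpqr : IsUnit (p * q * r : S))
    (hxyz : M * Ideal.span {x * y * z} ≤ M ^ 2 * jacobianIdeal p q r c x y z) :
    M * Ideal.span {x ^ p + y ^ q + z ^ r + c * (x * y * z)} ≤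
      M ^ 2 * jacobianIdeal p q r c x y z := by
  set J := jacobianIdeal p q r c x y z
  have euler : (p * q * r : S) * (x ^ p + y ^ q + z ^ r + c * (x * y * z)) =
      q * r * x * (p * x ^ (p - 1) + c * (y * z)) + p * r * y * (q * y ^ (q - 1) + c * (x * z))
      + p * q * z * (r * z ^ (r - 1) + c * (x * y))
      + c * (p * q * r - q * r - p * r - p * q) * (x * y * z) := by
    rw [← mul_pow_sub_one hp x, ← mul_pow_sub_one hq y, ← mul_pow_sub_one hr z]
    ring
  have hmem : (p * q * r : S) * (x ^ p + y ^ q + z ^ r + c * (x * y * z)) ∈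
      M * J ⊔ Ideal.span {x * y * z} := by
    rw [euler]
    refine add_mem (Ideal.mem_sup_left (add_mem (add_mem ?_ ?_) ?_))
      (Ideal.mem_sup_right (Ideal.mul_mem_left _ _ (Ideal.mem_span_singleton_self _)))
    · exact Ideal.mul_mem_mul (Ideal.mul_mem_left _ _ hx) (Ideal.subset_span (by simp))
    · exact Ideal.mul_mem_mul (Ideal.mul_mem_left _ _ hy) (Ideal.subset_span (by simp))
    · exact Ideal.mul_mem_mul (Ideal.mul_mem_left _ _ hz) (Ideal.subset_span (by simp))
  calc M * Ideal.span {x ^ p + y ^ q + z ^ r + c * (x * y * z)}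
      = M * Ideal.span {(p * q * r : S) * (x ^ p + y ^ q + z ^ r + c * (x * y * z))} := by
        rw [Ideal.span_singleton_mul_left_unit hpqr]
    _ ≤ M * (M * J ⊔ Ideal.span {x * y * z}) :=
        Ideal.mul_mono_right (Ideal.span_le.mpr (Set.singleton_subset_iff.mpr hmem))
    _ = M ^ 2 * J ⊔ M * Ideal.span {x * y * z} := by rw [Ideal.mul_sup, ← mul_assoc, ← sq]
    _ ≤ M ^ 2 * J := sup_le le_rfl hxyz

open IsLocalRing in
theorem maximalIdeal_mul_span_xyz_le [IsLocalRing S] (hp : 3 ≤ p) (hq : 3 ≤ q) (hr : 3 ≤ r)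
    (h3 : 3 < p ∨ 3 < q ∨ 3 < r) (hc : IsUnit c) (hM : maximalIdeal S = Ideal.span {x, y, z}) :
    maximalIdeal S * Ideal.span {x * y * z} ≤
      maximalIdeal S ^ 2 * jacobianIdeal p q r c x y z := by
  have hx : x ∈ maximalIdeal S := hM ▸ Ideal.subset_span (by simp)
  have hy : y ∈ maximalIdeal S := hM ▸ Ideal.subset_span (by simp)
  have hz : z ∈ maximalIdeal S := hM ▸ Ideal.subset_span (by simp)
  have hmonomial : x ^ (p - 3) * y ^ (q - 3) * z ^ (r - 3) ∈ maximalIdeal S := by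
    rcases h3 with h | h | h
    · exact Ideal.mul_mem_right _ _ <| Ideal.mul_mem_right _ _ <|
        Ideal.pow_mem_of_mem _ hx _ (by omega)
    · exact Ideal.mul_mem_right _ _ <| Ideal.mul_mem_left _ _ <|
        Ideal.pow_mem_of_mem _ hy _ (by omega)
    · exact Ideal.mul_mem_left _ _ <| Ideal.pow_mem_of_mem _ hz _ (by omega)
  nth_rw 1 [hM]
  exact span_mul_span_xyz_le hp hq hr hx hy hz
    (isUnit_add_of_mem_maximalIdeal (hc.pow 3) (Ideal.mul_mem_left _ _ hmonomial))

end Tpqr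

/-- Conclusion of Example 3 of the paper: for `f = x^p + y^q + z^r + c·xyz` with
`p,q,r ≥ 3`, `1/p + 1/q + 1/r < 1` and `c ≠ 0`, in the local ring at the origin
(the localization of `ℂ[x,y,z]` at the prime `(x,y,z)`) one has
`𝔪·(xyz) ⊆ 𝔪²·J` and `𝔪·(f) ⊆ 𝔪²·J` where `J` is the Jacobian ideal. -/
theorem example3_conclusion (p q r : ℕ) (hp : 3 ≤ p) (hq : 3 ≤ q) (hr : 3 ≤ r)
    (hρ : (1 / p + 1 / q + 1 / r : ℝ) < 1)
    (c : ℂ) (hc : c ≠ 0)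
    (𝔭 : Ideal (MvPolynomial (Fin 3) ℂ))
    (h𝔭 : 𝔭 = Ideal.span {X 0, X 1, X 2}) [𝔭.IsPrime] :
    let R := MvPolynomial (Fin 3) ℂ
    let x : R := X 0
    let y : R := X 1
    let z : R := X 2
    let f : R := x ^ p + y ^ q + z ^ r + C c * (x * y * z)
    let fx : R := (p : R) * x ^ (p - 1) + C c * (y * z)
    let fy : R := (q : R) * y ^ (q - 1) + C c * (x * z)
    let fz : R := (r : R) * z ^ (r - 1) + C c * (x * y)
    let S := Localization.AtPrime 𝔭
    let φ : R →+* S := algebraMap R S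
    let 𝔪 : Ideal S := IsLocalRing.maximalIdeal S
    let J : Ideal S := Ideal.span {φ fx, φ fy, φ fz}
    𝔪 * Ideal.span {φ (x * y * z)} ≤ 𝔪 ^ 2 * J ∧
      𝔪 * Ideal.span {φ f} ≤ 𝔪 ^ 2 * J := by
  intro R x y z f fx fy fz S φ 𝔪 J
  have h3 : 3 < p ∨ 3 < q ∨ 3 < r := by
    by_contra! h
    obtain ⟨rfl, rfl, rfl⟩ : p = 3 ∧ q = 3 ∧ r = 3 := by omega
    norm_num at hρ
  have hunit {a : ℂ} (ha : a ≠ 0) : IsUnit (φ (C a)) :=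
    ((isUnit_iff_ne_zero.mpr ha).map C).map φ
  have h𝔪 : 𝔪 = Ideal.span {φ x, φ y, φ z} := by
    rw [show 𝔪 = 𝔭.map φ from Localization.AtPrime.map_eq_maximalIdeal.symm,
      congrArg (Ideal.map φ) h𝔭, Ideal.map_span]
    simp [Set.image_insert_eq, x, y, z]
  have hgen : ∀ t ∈ ({φ x, φ y, φ z} : Set S), t ∈ 𝔪 := fun _ ht ↦ h𝔪 ▸ Ideal.subset_span ht
  have hJ : J = Tpqr.jacobianIdeal p q r (φ (C c)) (φ x) (φ y) (φ z) := by
    simp only [J, fx, fy, fz, Tpqr.jacobianIdeal, map_add, map_mul, map_pow,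
      map_natCast]
  have hxyz := Tpqr.maximalIdeal_mul_span_xyz_le hp hq hr h3 (hunit hc) h𝔪
  rw [hJ]
  refine ⟨by simpa only [map_mul] using hxyz, ?_⟩
  simpa only [f, map_add, map_mul, map_pow] using
    Tpqr.mul_span_le_sq_mul_jacobianIdeal (by omega) (by omega) (by omega)
      (hgen _ (by simp)) (hgen _ (by simp)) (hgen _ (by simp))
      (by simpa using hunit (a := p * q * r) (by simp; omega)) hxyz
end

section
/- Let n, k ∈ ℕ and let A := MvPowerSeries (Fin (n+1)) ℂ, a local ring; write T for the last variable (index Fin.last n) and regard each MvPolynomial (Fin (n+1)) ℂ as an element of A. Let P, Q ∈ MvPolynomial (Fin (n+1)) ℂ satisfy pderiv (Fin.last n) P = 0 and pderiv (Fin.last n) Q = 0 (they do not involve T), and set f := P + T·Q. In A define 𝔐 := Ideal.span { X i : i ≠ Fin.last n }, J(P) := Ideal.span { pderiv i P : i ≠ Fin.last n }, J(Q) := Ideal.span { pderiv i Q : i ≠ Fin.last n }, and J_/(f) := Ideal.span { pderiv i f : i ≠ Fin.last n } (all generators taken as elements of A). If 𝔐^{k+1}·J(Q) ⊆ 𝔐^{k+1}·J(P),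 then 𝔐^{k+1}·J_/(f) = 𝔐^{k+1}·J(P). If moreover Q ∈ 𝔐·J(Q), then 𝔐^{k}·Ideal.span {Q} ⊆ 𝔐^{k+1}·J_/(f). -/
open MvPolynomial

/-! Since `∂f/∂xᵢ = ∂P/∂xᵢ + T·∂Q/∂xᵢ`, the ideals `J_/(f)` and `J(P)` agree modulo `T·J(Q)`.
After multiplying by `𝔐^{k+1}` the hypothesis `𝔐^{k+1}·J(Q) ⊆ 𝔐^{k+1}·J(P)` gives
`𝔐^{k+1}·J_/(f) ⊆ 𝔐^{k+1}·J(P) ⊆ 𝔐^{k+1}·J_/(f) + T·𝔐^{k+1}·J(P)`, and as `T` lies in the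
maximal ideal of the local ring `A`, Nakayama's lemma (which replaces the inversion of `Id + T·R`)
turns this into an equality. The second claim follows from `𝔐^k·Q ⊆ 𝔐^{k+1}·J(Q)`. -/

namespace Ideal

variable {R : Type*} [CommRing R]

theorem mul_eq_of_sup_mul_eq {I J K M T : Ideal R} (hT : T ≤ jacobson ⊥) (hMJ : (M * J).FG)
    (hIJ : I ⊔ T * K = J ⊔ T * K) (hK : M * K ≤ M * J) : M * I = M * J := by
  have absorb : ∀ L, M * (L ⊔ T * K) ≤ M * L ⊔ T • (M * J) := fun L => by
    rw [mul_sup, smul_eq_mul, mul_left_comm]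
    exact sup_le_sup_left (mul_mono_right hK) _
  have hI : I ≤ J ⊔ T * K := hIJ ▸ le_sup_left
  have hJ : J ≤ I ⊔ T * K := hIJ ▸ le_sup_left
  apply le_antisymm
  · calc M * I ≤ M * (J ⊔ T * K) := mul_mono_right hI
      _ ≤ M * J ⊔ T • (M * J) := absorb J
      _ ≤ M * J := sup_le le_rfl Submodule.smul_le_right
  · exact Submodule.le_of_le_smul_of_le_jacobson_bot hMJ hT <|
      (mul_mono_right hJ).trans (absorb I)

theorem span_image_add_mul_sup {ι : Type*} (s : Set ι) (p q : ι → R) {t : R} {T : Ideal R}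
    (ht : t ∈ T) :
    span ((fun i => p i + t * q i) '' s) ⊔ T * span (q '' s) =
      span (p '' s) ⊔ T * span (q '' s) := by
  have htq : ∀ i ∈ s, t * q i ∈ T * span (q '' s) := fun i hi =>
    mul_mem_mul ht (subset_span ⟨i, hi, rfl⟩)
  refine le_antisymm (sup_le (span_le.2 ?_) le_sup_right) (sup_le (span_le.2 ?_) le_sup_right)
  · rintro _ ⟨i, hi, rfl⟩
    exact add_mem (mem_sup_left (subset_span ⟨i, hi, rfl⟩)) (mem_sup_right (htq i hi))
  · rintro _ ⟨i, hi, rfl⟩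
    rw [← add_sub_cancel_right (p i) (t * q i)]
    exact sub_mem (mem_sup_left (subset_span ⟨i, hi, rfl⟩)) (mem_sup_right (htq i hi))

theorem pow_mul_span_singleton_le {M K : Ideal R} {x : R} (hx : x ∈ M * K) (k : ℕ) :
    M ^ k * span {x} ≤ M ^ (k + 1) * K := by
  rw [pow_succ, mul_assoc]
  exact mul_mono_right (span_singleton_le_iff_mem _ |>.2 hx)

end Ideal

theorem Set.setOf_exists_ne_and_eq_eq_image {ι α : Type*} (p : ι → α) (j : ι) :
    {g | ∃ i, i ≠ j ∧ g = p i} = p '' {j}ᶜ := by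
  ext; simp [eq_comm]

theorem MvPolynomial.pderiv_add_X_mul_of_ne {σ R : Type*} [CommSemiring R] {i j : σ} (h : i ≠ j)
    (P Q : MvPolynomial σ R) :
    pderiv i (P + X j * Q) = pderiv i P + X j * pderiv i Q := by
  rw [map_add, Derivation.leibniz, pderiv_X_of_ne h.symm, smul_zero, add_zero, smul_eq_mul]

theorem MvPowerSeries.X_mem_maximalIdeal {σ R : Type*} [CommRing R] [IsLocalRing R] (i : σ) :
    X i ∈ IsLocalRing.maximalIdeal (MvPowerSeries σ R) := by
  rw [IsLocalRing.mem_maximalIdeal, mem_nonunits_iff, isUnit_iff_constantCoeff, constantCoeff_X]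
  exact not_isUnit_zero

theorem deformation_jacobian_ideal_general (n k : ℕ)
    (P Q : MvPolynomial (Fin (n + 1)) ℂ) :
    let A := MvPowerSeries (Fin (n + 1)) ℂ
    let f : MvPolynomial (Fin (n + 1)) ℂ := P + X (Fin.last n) * Q
    let 𝔐 : Ideal A :=
      Ideal.span {g : A | ∃ i, i ≠ Fin.last n ∧ g = MvPowerSeries.X i}
    let JP : Ideal A :=
      Ideal.span {g : A | ∃ i, i ≠ Fin.last n ∧ g = ↑(pderiv i P)}
    let JQ : Ideal A :=
      Ideal.span {g : A | ∃ i, i ≠ Fin.last n ∧ g = ↑(pderiv i Q)}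
    let Jf : Ideal A :=
      Ideal.span {g : A | ∃ i, i ≠ Fin.last n ∧ g = ↑(pderiv i f)}
    𝔐 ^ (k + 1) * JQ ≤ 𝔐 ^ (k + 1) * JP →
      (𝔐 ^ (k + 1) * Jf = 𝔐 ^ (k + 1) * JP ∧
        ((↑Q : A) ∈ 𝔐 * JQ →
          𝔐 ^ k * Ideal.span {(↑Q : A)} ≤ 𝔐 ^ (k + 1) * Jf)) := by
  simp only [Set.setOf_exists_ne_and_eq_eq_image]
  intro hJQ
  have hf : (fun i => (pderiv i (P + X (Fin.last n) * Q) : MvPowerSeries (Fin (n + 1)) ℂ)) ''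
      {Fin.last n}ᶜ = (fun i => (pderiv i P : MvPowerSeries (Fin (n + 1)) ℂ) +
        MvPowerSeries.X (Fin.last n) * (pderiv i Q : MvPowerSeries (Fin (n + 1)) ℂ)) ''
      {Fin.last n}ᶜ :=
    Set.image_congr fun i hi => by rw [pderiv_add_X_mul_of_ne hi, coe_add, coe_mul, coe_X]
  rw [hf]
  have heq := Ideal.mul_eq_of_sup_mul_eq (IsLocalRing.maximalIdeal_le_jacobson _)
    ((Submodule.fg_span (Set.toFinite _)).pow _ |>.mul (Submodule.fg_span (Set.toFinite _)))
    (Ideal.span_image_add_mul_sup _ _ _ (MvPowerSeries.X_mem_maximalIdeal (Fin.last n))) hJQ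
  exact ⟨heq, fun hQ => heq ▸ (Ideal.pow_mul_span_singleton_le hQ k).trans hJQ⟩

/-- Formal-power-series version of the Lemma of Example 1 of the paper: for a
deformation `f = P + T·Q` (with `P, Q` not involving the last variable `T`),
if `𝔐^{k+1}·J(Q) ⊆ 𝔐^{k+1}·J(P)` then `𝔐^{k+1}·J_/(f) = 𝔐^{k+1}·J(P)`;
if moreover `Q ∈ 𝔐·J(Q)` then `𝔐^k·(Q) ⊆ 𝔐^{k+1}·J_/(f)`. -/
theorem deformation_jacobian_ideal (n k : ℕ)
    (P Q : MvPolynomial (Fin (n + 1)) ℂ)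
    (hP : pderiv (Fin.last n) P = 0) (hQ : pderiv (Fin.last n) Q = 0) :
    let A := MvPowerSeries (Fin (n + 1)) ℂ
    let f : MvPolynomial (Fin (n + 1)) ℂ := P + X (Fin.last n) * Q
    let 𝔐 : Ideal A :=
      Ideal.span {g : A | ∃ i, i ≠ Fin.last n ∧ g = MvPowerSeries.X i}
    let JP : Ideal A :=
      Ideal.span {g : A | ∃ i, i ≠ Fin.last n ∧ g = ↑(pderiv i P)}
    let JQ : Ideal A :=
      Ideal.span {g : A | ∃ i, i ≠ Fin.last n ∧ g = ↑(pderiv i Q)}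
    let Jf : Ideal A :=
      Ideal.span {g : A | ∃ i, i ≠ Fin.last n ∧ g = ↑(pderiv i f)}
    𝔐 ^ (k + 1) * JQ ≤ 𝔐 ^ (k + 1) * JP →
      (𝔐 ^ (k + 1) * Jf = 𝔐 ^ (k + 1) * JP ∧
        ((↑Q : A) ∈ 𝔐 * JQ →
          𝔐 ^ k * Ideal.span {(↑Q : A)} ≤ 𝔐 ^ (k + 1) * Jf)) :=
  deformation_jacobian_ideal_general n k P Q
end
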